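/- arXiv:cs/0609110 — 5 statements merged into one kernel-verified Lean document; each statement's English description precedes it below -/
import Mathlib

section
/- For every n ≥ 0, the relation 'u and v have the same set of subwords (scattered subsequences) of length at most n' is a monoid congruence on A* of finite index. -/
/-- Two words are `n`-piecewise equivalent if they have the same subwords
(scattered subsequences, i.e. sublists) of length at most `n`. -/
def PwRel {A : Type} (n : ℕ) (u v : List A) : Prop :=
  ∀ w : List A, w.length ≤ n → (List.Sublist w u ↔ List.Sublist w v)

/-- For every `n`, having the same subwords of length `≤ n` is a monoid
congruence of finite index on `A*`. -/
theorem stmt10 {A : Type} [Fintype A] (n : ℕ) :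
    Equivalence (PwRel (A := A) n) ∧
    (∀ u v u' v' : List A, PwRel n u u' → PwRel n v v' →
      PwRel n (u ++ v) (u' ++ v')) ∧
    Finite (Quot (PwRel (A := A) n)) := by
  refine ⟨⟨fun u w _ => Iff.rfl, fun h w hw => (h w hw).symm,
      fun h1 h2 w hw => (h1 w hw).trans (h2 w hw)⟩, ?_, ?_⟩
  · intro u v u' v' hu hv w hw
    simp only [List.sublist_append_iff]
    constructor <;> rintro ⟨x, y, rfl, hx, hy⟩
    · exact ⟨x, y, rfl, (hu x (le_trans (by simp) hw)).mp hx,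
        (hv y (le_trans (by simp) hw)).mp hy⟩
    · exact ⟨x, y, rfl, (hu x (le_trans (by simp) hw)).mpr hx,
        (hv y (le_trans (by simp) hw)).mpr hy⟩
  · haveI hfin : Finite {w : List A // w.length ≤ n} :=
      (List.finite_length_le A n).to_subtype
    let f : List A → ({w : List A // w.length ≤ n} → Prop) :=
      fun u w => List.Sublist w.1 u
    have hf : ∀ u v, PwRel n u v → f u = f v := by
      intro u v h
      funext w
      exact propext (h w.1 w.2)
    have : Function.Injective (Quot.lift f hf) := by
      intro a b
      induction a using Quot.ind with | _ u =>
      induction b using Quot.ind with | _ v =>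
      intro hab
      refine Quot.sound fun w hw => ?_
      exact iff_of_eq (congrFun hab ⟨w, hw⟩)
    exact Finite.of_injective _ this
end

section
/- In the free commutative monoid over a finite set A (i.e., multisets over A, or functions A → ℕ under pointwise addition), a subset L is recognized by a finite commutative monoid if and only if L is a finite union of sets of the form { f : f(a) ∈ S_a for all a ∈ A } where each S_a is an ultimately periodic subset of ℕ. -/
namespace Stmt13Aux

def red (N p n : ℕ) : ℕ := if n < N then n else N + (n - N) % p

lemma red_lt (N p : ℕ) (hp : 1 ≤ p) (n : ℕ) : red N p n < N + p := by
  unfold red; split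
  · omega
  · have := Nat.mod_lt (n - N) hp; omega

lemma red_spec (N p n : ℕ) : ∃ t, n = red N p n + t * p := by
  unfold red; split
  · exact ⟨0, by omega⟩
  · refine ⟨(n - N) / p, ?_⟩
    have h := Nat.mod_add_div' (n - N) p
    omega

lemma red_ge (N p : ℕ) {n : ℕ} (h : N ≤ n) : N ≤ red N p n := by
  unfold red; split <;> omega

lemma red_lt_self (N p : ℕ) {n : ℕ} (h : n < N) : red N p n = n := if_pos h

lemma red_eq_self (N p : ℕ) (hp : 1 ≤ p) {n : ℕ} (h : n < N + p) : red N p n = n := by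
  unfold red; split
  · rfl
  · have : n - N < p := by omega
    rw [Nat.mod_eq_of_lt this]; omega

lemma red_idem (N p : ℕ) (hp : 1 ≤ p) (n : ℕ) : red N p (red N p n) = red N p n :=
  red_eq_self N p hp (red_lt N p hp n)

lemma red_of_ge (N p : ℕ) {n : ℕ} (h : N ≤ n) : red N p n = N + (n - N) % p :=
  if_neg (not_lt.mpr h)

lemma red_add_left (N p x y : ℕ) : red N p (x + y) = red N p (red N p x + y) := by
  rcases red_spec N p x with ⟨t, hx⟩
  by_cases h : x < N
  · rw [red_lt_self N p h]
  · have hN : N ≤ red N p x := red_ge N p (le_of_not_gt h)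
    rw [red_of_ge N p (by omega : N ≤ x + y), red_of_ge N p (by omega : N ≤ red N p x + y)]
    congr 1
    have hxy : x + y - N = (red N p x + y - N) + t * p := by omega
    rw [hxy, Nat.add_mul_mod_self_right]

lemma red_add_both (N p x y : ℕ) :
    red N p (x + y) = red N p (red N p x + red N p y) := by
  rw [red_add_left, add_comm (red N p x) y, red_add_left, add_comm (red N p y)]

def redCon (N p : ℕ) : AddCon ℕ where
  r x y := red N p x = red N p y
  iseqv := ⟨fun _ => rfl, Eq.symm, Eq.trans⟩
  add' := by
    intro a b c d hab hcd
    show red N p (a + c) = red N p (b + d)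
    rw [red_add_both N p a c, hab, hcd, ← red_add_both]

lemma up_iter {S : Set ℕ} {N0 p0 : ℕ} (h : ∀ n, N0 ≤ n → (n ∈ S ↔ n + p0 ∈ S)) :
    ∀ k n, N0 ≤ n → (n ∈ S ↔ n + k * p0 ∈ S) := by
  intro k
  induction k with
  | zero => simp
  | succ k ih =>
    intro n hn
    have h1 := ih n hn
    have h2 := h (n + k * p0) (by omega)
    rw [show n + (k + 1) * p0 = n + k * p0 + p0 by ring]
    exact h1.trans h2

lemma smul_iter {M : Type*} [AddCommMonoid M] {m : M} {N0 p0 : ℕ}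
    (h : ∀ n, N0 ≤ n → (n + p0) • m = n • m) :
    ∀ k n, N0 ≤ n → (n + k * p0) • m = n • m := by
  intro k
  induction k with
  | zero => simp
  | succ k ih =>
    intro n hn
    have : n + (k + 1) * p0 = (n + k * p0) + p0 := by ring
    rw [this, h (n + k * p0) (by omega), ih n hn]

lemma exists_period {M : Type*} [AddCommMonoid M] [Finite M] (m : M) :
    ∃ N0 p0 : ℕ, 1 ≤ p0 ∧ ∀ n, N0 ≤ n → (n + p0) • m = n • m := by
  obtain ⟨i, j, hne, hij⟩ := Finite.exists_ne_map_eq_of_infinite (fun n : ℕ => n • m)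
  have key : ∀ i j : ℕ, i < j → i • m = j • m →
      ∃ N0 p0 : ℕ, 1 ≤ p0 ∧ ∀ n, N0 ≤ n → (n + p0) • m = n • m := by
    intro i j hlt he
    refine ⟨i, j - i, by omega, fun n hn => ?_⟩
    calc (n + (j - i)) • m = ((n - i) + j) • m := by congr 1; omega
      _ = (n - i) • m + j • m := add_nsmul m (n - i) j
      _ = (n - i) • m + i • m := by rw [← he]
      _ = ((n - i) + i) • m := (add_nsmul m (n - i) i).symm
      _ = n • m := by congr 1; omega
  rcases lt_or_gt_of_ne hne with h | h
  · exact key i j h hij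
  · exact key j i h hij.symm

lemma up_red_mem {S : Set ℕ} {N0 p0 : ℕ}
    (h : ∀ n, N0 ≤ n → (n ∈ S ↔ n + p0 ∈ S)) {N p : ℕ}
    (hN : N0 ≤ N) (hp : p0 ∣ p) {x y : ℕ} (hxy : red N p x = red N p y) :
    x ∈ S ↔ y ∈ S := by
  obtain ⟨c, rfl⟩ := hp
  have key : ∀ z : ℕ, (z ∈ S ↔ red N (p0 * c) z ∈ S) := by
    intro z
    by_cases hz : z < N
    · rw [red_lt_self N _ hz]
    · have hNz : N ≤ red N (p0 * c) z := red_ge _ _ (le_of_not_gt hz)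
      obtain ⟨t, ht⟩ := red_spec N (p0 * c) z
      have := up_iter h (t * c) (red N (p0 * c) z) (le_trans hN hNz)
      rw [show t * c * p0 = t * (p0 * c) by ring, ← ht] at this
      exact this.symm
  rw [key x, key y, hxy]

lemma smul_red {M : Type*} [AddCommMonoid M] {m : M} {N0 p0 : ℕ}
    (h : ∀ n, N0 ≤ n → (n + p0) • m = n • m) {N p : ℕ}
    (hN : N0 ≤ N) (hp : p0 ∣ p) (n : ℕ) : red N p n • m = n • m := by
  obtain ⟨c, rfl⟩ := hp
  by_cases hz : n < N
  · rw [red_lt_self N _ hz]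
  · have hNz : N ≤ red N (p0 * c) n := red_ge _ _ (le_of_not_gt hz)
    obtain ⟨t, ht⟩ := red_spec N (p0 * c) n
    have := smul_iter h (t * c) (red N (p0 * c) n) (le_trans hN hNz)
    rw [show t * c * p0 = t * (p0 * c) by ring, ← ht] at this
    rw [← this]

lemma phi_expand {A M : Type*} [Fintype A] [DecidableEq A] [AddCommMonoid M]
    (φ : (A → ℕ) →+ M) (f : A → ℕ) :
    φ f = ∑ a, (f a) • φ (Pi.single a 1) := by
  classical
  conv_lhs => rw [← Finset.univ_sum_single f]
  rw [map_sum]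
  refine Finset.sum_congr rfl fun a _ => ?_
  rw [← map_nsmul]
  congr 1
  funext x
  by_cases hx : x = a <;> simp [hx, Pi.single_apply]

lemma sat_of {α β : Type*} (φ : α → β) (L : Set α)
    (h : ∀ f g, φ f = φ g → f ∈ L → g ∈ L) :
    L = φ ⁻¹' (φ '' L) := by
  ext f
  constructor
  · exact fun hf => ⟨f, hf, rfl⟩
  · rintro ⟨g, hg, hfg⟩; exact h g f hfg hg

lemma red_add_period (N p : ℕ) (hp : 1 ≤ p) {n : ℕ} (hn : N ≤ n) :
    red N p (n + p) = red N p n := by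
  unfold red
  rw [if_neg (by omega), if_neg (by omega)]
  congr 1
  rw [show n + p - N = (n - N) + p by omega, Nat.add_mod_right]

end Stmt13Aux

/-- A subset `S ⊆ ℕ` is ultimately periodic. -/
def UltPeriodic (S : Set ℕ) : Prop :=
  ∃ N p : ℕ, 1 ≤ p ∧ ∀ n : ℕ, N ≤ n → (n ∈ S ↔ n + p ∈ S)

open Stmt13Aux in
/-- In the free commutative monoid `A → ℕ`, a subset is recognized by a finite
commutative monoid iff it is a finite union of "boxes" with ultimately periodic
sides. -/
theorem stmt13 {A : Type} [Fintype A] (L : Set (A → ℕ)) :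
    (∃ (M : Type) (_ : AddCommMonoid M), Finite M ∧
        ∃ φ : (A → ℕ) →+ M, L = φ ⁻¹' (φ '' L)) ↔
    (∃ (k : ℕ) (S : Fin k → A → Set ℕ),
        (∀ i a, UltPeriodic (S i a)) ∧
        L = ⋃ i : Fin k, {f : A → ℕ | ∀ a : A, f a ∈ S i a}) := by
  classical
  constructor
  · rintro ⟨M, _, hfin, φ, hL⟩
    set m : A → M := fun a => φ (Pi.single a 1) with hm
    choose Na pa hpa hper using fun a => exists_period (m a)
    set N := ∑ a, Na a with hN
    set p := ∏ a, pa a with hpdef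
    have hp : 1 ≤ p := Nat.one_le_iff_ne_zero.mpr (Finset.prod_ne_zero_iff.mpr (fun a _ => by have := hpa a; omega))
    have hNa : ∀ a, Na a ≤ N := fun a =>
      Finset.single_le_sum (fun _ _ => Nat.zero_le _) (Finset.mem_univ a)
    have hpd : ∀ a, pa a ∣ p := fun a => Finset.dvd_prod_of_mem _ (Finset.mem_univ a)
    have hred : ∀ a n, red N p n • m a = n • m a := fun a n =>
      smul_red (hper a) (hNa a) (hpd a) n
    have hphi : ∀ f g : A → ℕ, (∀ a, red N p (f a) = red N p (g a)) → φ f = φ g := by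
      intro f g h
      rw [phi_expand φ f, phi_expand φ g]
      refine Finset.sum_congr rfl fun a _ => ?_
      rw [← hm] at *
      rw [← hred a (f a), ← hred a (g a), h a]
    set I := {r : A → Fin (N + p) // (fun a => (r a : ℕ)) ∈ L} with hI
    refine ⟨Fintype.card I,
      fun i a => {n | red N p n = (((Fintype.equivFin I).symm i).1 a : ℕ)}, ?_, ?_⟩
    · intro i a
      refine ⟨N, p, hp, fun n hn => ?_⟩
      simp only [Set.mem_setOf_eq, red_add_period N p hp hn]
    · ext f
      simp only [Set.mem_iUnion, Set.mem_setOf_eq]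
      constructor
      · intro hf
        have hr : (fun a => ((⟨red N p (f a), red_lt N p hp (f a)⟩ : Fin (N + p)) : ℕ)) ∈ L := by
          have hφ : φ (fun a => ((⟨red N p (f a), red_lt N p hp (f a)⟩ : Fin (N + p)) : ℕ)) = φ f :=
            hphi _ _ (fun a => red_idem N p hp (f a))
          rw [hL]
          exact ⟨f, hf, hφ.symm⟩
        refine ⟨(Fintype.equivFin I) ⟨_, hr⟩, fun a => ?_⟩
        rw [Equiv.symm_apply_apply]
      · rintro ⟨i, hi⟩
        set r := ((Fintype.equivFin I).symm i) with hr
        have hφ : φ f = φ (fun a => (r.1 a : ℕ)) := by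
          refine hphi _ _ (fun a => ?_)
          rw [hi a, red_eq_self N p hp (r.1 a).2]
        rw [hL]
        exact ⟨_, r.2, hφ.symm⟩
  · rintro ⟨k, S, hS, rfl⟩
    have hS' : ∀ i a, ∃ N0 p0 : ℕ, 1 ≤ p0 ∧ ∀ n, N0 ≤ n → (n ∈ S i a ↔ n + p0 ∈ S i a) := hS
    choose Nf pf hpf hper using hS'
    set N := ∑ i, ∑ a, Nf i a with hN
    set p := ∏ i, ∏ a, pf i a with hpdef
    have hp : 1 ≤ p := Nat.one_le_iff_ne_zero.mpr (Finset.prod_ne_zero_iff.mpr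
      (fun i _ => Finset.prod_ne_zero_iff.mpr (fun a _ => by have := hpf i a; omega)))
    have hNle : ∀ i a, Nf i a ≤ N := by
      intro i a
      calc Nf i a ≤ ∑ a, Nf i a :=
            Finset.single_le_sum (fun _ _ => Nat.zero_le _) (Finset.mem_univ a)
        _ ≤ N := Finset.single_le_sum (f := fun i => ∑ a, Nf i a) (fun _ _ => Nat.zero_le _) (Finset.mem_univ i)
    have hpd : ∀ i a, pf i a ∣ p := by
      intro i a
      exact dvd_trans (Finset.dvd_prod_of_mem _ (Finset.mem_univ a))
        (Finset.dvd_prod_of_mem _ (Finset.mem_univ i))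
    set c := redCon N p with hc
    have hfinQ : Finite c.Quotient := by
      refine Finite.of_injective
        (fun x : c.Quotient => Quotient.liftOn' x
          (fun n => (⟨red N p n, red_lt N p hp n⟩ : Fin (N + p)))
          (fun a b h => Fin.ext h)) ?_
      rintro ⟨x⟩ ⟨y⟩ h
      exact Quotient.sound' (show red N p x = red N p y from congrArg Fin.val h)
    refine ⟨A → c.Quotient, inferInstance, Pi.finite, ?_⟩
    refine ⟨{ toFun := fun f a => ((f a : ℕ) : c.Quotient),
              map_zero' := rfl,
              map_add' := fun f g => rfl }, ?_⟩
    apply sat_of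
    intro f g hfg hf
    have hred : ∀ a, red N p (f a) = red N p (g a) := by
      intro a
      have := congrFun hfg a
      exact c.eq.mp this
    simp only [Set.mem_iUnion, Set.mem_setOf_eq] at hf ⊢
    obtain ⟨i, hi⟩ := hf
    refine ⟨i, fun a => ?_⟩
    exact (up_red_mem (hper i a) (hNle i a) (hpd i a) (hred a)).mp (hi a)
end

section
/- The language a*b over the alphabet A = {a, b} is not recognizable with respect to the algebra (A*, ·, sh) whose operations are concatenation and the shift sh (sh(1) = 1, sh(ua) = au): there is no equivalence relation on A* of finite index that is compatible with both concatenation and sh and saturates a*b. -/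
/-- The shift operation: `sh 1 = 1` and `sh (u·a) = a·u`. -/
def sh {A : Type} (l : List A) : List A :=
  match l.reverse with
  | [] => []
  | a :: t => a :: t.reverse

/-- The language `a*b` over a two-letter alphabet (`a = 0`, `b = 1`). -/
def aStarB : Set (List (Fin 2)) :=
  {w : List (Fin 2) | ∃ n : ℕ, w = List.replicate n 0 ++ [1]}

/-
Shifting the words `b aⁿ` is a rotation: `shᵐ (b aⁿ) = aᵐ b aⁿ⁻ᵐ` for `m ≤ n`. If finitely
many classes exist, two words `b aᵐ` and `b aⁿ` with `m < n` are equivalent, and after `m` shifts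
the word `aᵐ b ∈ a*b` becomes equivalent to `aᵐ b aⁿ⁻ᵐ ∉ a*b`.
-/

theorem sh_append_singleton {A : Type} (w : List A) (x : A) : sh (w ++ [x]) = x :: w := by
  simp [sh]

theorem sh_iterate_append {A : Type} (u v : List A) : sh^[v.length] (u ++ v) = v ++ u := by
  induction v using List.reverseRecOn generalizing u with
  | nil => simp
  | append_singleton v x ih =>
    rw [List.length_append, List.length_singleton, Function.iterate_succ_apply,
      ← List.append_assoc, sh_append_singleton, ← List.cons_append, ih]
    simp

theorem rel_iterate_of_rel_map {α : Type*} {r : α → α → Prop} {f : α → α}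
    (hf : ∀ u v, r u v → r (f u) (f v)) (k : ℕ) {u v : α} (h : r u v) :
    r (f^[k] u) (f^[k] v) := by
  induction k with
  | zero => exact h
  | succ k ih => simpa only [Function.iterate_succ_apply'] using hf _ _ ih

theorem append_zero_not_mem_aStarB (w : List (Fin 2)) : w ++ [0] ∉ aStarB := by
  rintro ⟨n, h⟩
  have := List.append_inj_right' h rfl
  simp at this

/-- `a*b` is not recognizable in the algebra `(A*, ·, sh)`: no finite-index
equivalence relation compatible with concatenation and shift saturates it. -/
theorem stmt15 :
    ¬ ∃ r : List (Fin 2) → List (Fin 2) → Prop,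
      Equivalence r ∧ Finite (Quot r) ∧
      (∀ u u' v v' : List (Fin 2), r u u' → r v v' → r (u ++ v) (u' ++ v')) ∧
      (∀ u v : List (Fin 2), r u v → r (sh u) (sh v)) ∧
      (∀ u v : List (Fin 2), r u v → (u ∈ aStarB ↔ v ∈ aStarB)) := by
  rintro ⟨r, hr, hfin, -, hsh, hsat⟩
  obtain ⟨m, n, hmn, hq⟩ := Set.finite_univ.exists_lt_map_eq_of_forall_mem
    (f := fun n : ℕ => Quot.mk r (1 :: List.replicate n 0)) fun _ => Set.mem_univ _
  obtain ⟨k, rfl⟩ := Nat.exists_eq_add_of_lt hmn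
  have hword : (1 : Fin 2) :: List.replicate (m + k + 1) 0 =
      (1 :: List.replicate k 0 ++ [0]) ++ List.replicate m 0 := by
    rw [show m + k + 1 = k + 1 + m by omega, List.replicate_add, List.replicate_succ']
    simp
  have hrel := hr.eqvGen_iff.mp ((Quot.eq ..).mp hq)
  rw [hword, ← List.singleton_append] at hrel
  have hrot := rel_iterate_of_rel_map hsh (List.replicate m (0 : Fin 2)).length hrel
  rw [sh_iterate_append, sh_iterate_append, ← List.append_assoc] at hrot
  exact append_zero_not_mem_aStarB _ ((hsat _ _ hrot).mp ⟨m, rfl⟩)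
end

section
/- On ℕ equipped with the constant 0 and the unary successor and predecessor operations (predecessor of 0 being 0), the only subsets recognizable by a finite algebra of this signature are ∅ and ℕ: any equivalence relation of finite index on ℕ compatible with successor and predecessor and saturating a set S forces S ∈ {∅, ℕ}. -/
/-- On `ℕ` with `0`, successor and (truncated) predecessor, any finite-index
equivalence relation compatible with successor and predecessor saturates only
`∅` and `ℕ`. -/
theorem stmt16 (r : ℕ → ℕ → Prop) (heq : Equivalence r)
    (hfin : Finite (Quot r))
    (hsucc : ∀ m n : ℕ, r m n → r (m + 1) (n + 1))
    (hpred : ∀ m n : ℕ, r m n → r (m - 1) (n - 1))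
    (S : Set ℕ) (hsat : ∀ m n : ℕ, r m n → (m ∈ S ↔ n ∈ S)) :
    S = ∅ ∨ S = Set.univ := by
  -- pigeonhole: two distinct naturals are related
  obtain ⟨m, n, hne, hq⟩ := Finite.exists_ne_map_eq_of_infinite (Quot.mk r)
  have hmn : r m n := (heq.eqvGen_iff).mp (Quot.eq.mp hq)
  -- wlog m < n
  wlog hlt : m < n generalizing m n
  · exact this n m hne.symm hq.symm (heq.symm hmn) (by omega)
  -- iterated predecessor: r (m - k) (n - k)
  have hsub : ∀ k, r (m - k) (n - k) := by
    intro k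
    induction k with
    | zero => simpa using hmn
    | succ k ih =>
      have := hpred _ _ ih
      simpa [Nat.sub_sub] using this
  have h0 : r 0 (n - m) := by simpa using hsub m
  -- descend: r 0 d for d ≥ 1 gives r 0 1
  have h01 : r 0 1 := by
    have key : ∀ d, r 0 (d + 1) → r 0 1 := by
      intro d
      induction d with
      | zero => exact fun h => h
      | succ d ih =>
        intro h
        have := hpred _ _ h
        simpa using ih this
    obtain ⟨d, hd⟩ : ∃ d, n - m = d + 1 := ⟨n - m - 1, by omega⟩
    exact key d (hd ▸ h0)
  -- hence r 0 k for all k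
  have hall : ∀ k, r 0 k := by
    intro k
    induction k with
    | zero => exact heq.refl 0
    | succ k ih => exact heq.trans h01 (hsucc _ _ ih)
  by_cases h : 0 ∈ S
  · right; ext k; simp [(hsat 0 k (hall k)).mp h]
  · left; ext k; simp; intro hk; exact h ((hsat 0 k (hall k)).mpr hk)
end

section
/- Ramsey-based extension for infinite words: if φ : A⁺ → S is a semigroup morphism onto a finite semigroup S, then every infinite word w ∈ Aᴺ admits a factorization w = u₀u₁u₂⋯ into nonempty finite words such that φ(u₁) = φ(u₂) = ⋯ = e for some idempotent e ∈ S with φ(u₀)·e = φ(u₀). -/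
/-!
Colour each pair `i < j` by `φ(w i ⋯ w (j-1))`. By Ramsey's theorem for pairs some infinite set
of cut points has all its pairs of one colour `e`. Since `φ` is multiplicative, any three cut
points `i < j < l` give `e * e = e`, and cutting `w` at these points yields the factorization.
-/

/-- The factor `w i · w (i+1) ⋯ w (j-1)` of an infinite word `w`, as an
element of the free semigroup (nonempty when `i < j`). -/
def seg {A : Type} (w : ℕ → A) (i j : ℕ) : FreeSemigroup A :=
  (((List.range' (i + 1) (j - i - 1)).map fun t => FreeSemigroup.of (w t)).foldl
    (· * ·) (FreeSemigroup.of (w i)))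

open Filter

theorem seg_succ_self {A : Type} (w : ℕ → A) (i : ℕ) :
    seg w i (i + 1) = FreeSemigroup.of (w i) := by
  simp [seg]

theorem seg_succ {A : Type} (w : ℕ → A) {i j : ℕ} (hij : i < j) :
    seg w i (j + 1) = seg w i j * FreeSemigroup.of (w j) := by
  have hlen : j + 1 - i - 1 = j - i - 1 + 1 := by omega
  have hlast : i + 1 + 1 * (j - i - 1) = j := by omega
  simp only [seg, hlen, List.range'_concat, hlast, List.map_append, List.foldl_append,
    List.map_singleton, List.foldl_cons, List.foldl_nil]

theorem seg_mul {A : Type} (w : ℕ → A) {i j l : ℕ} (hij : i < j) (hjl : j < l) :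
    seg w i j * seg w j l = seg w i l := by
  induction l, hjl using Nat.le_induction with
  | base => rw [seg_succ_self, seg_succ w hij]
  | succ l hjl ih => rw [seg_succ w hjl, ← mul_assoc, ih, seg_succ w (hij.trans hjl)]

theorem Ultrafilter.exists_eventually_eq_of_finite {α β : Type*} [Finite α] (U : Ultrafilter β)
    (g : β → α) : ∃ a, ∀ᶠ x in U, g x = a := by
  obtain ⟨a, ha⟩ := (U.map g).eq_pure_of_finite
  exact ⟨a, show g ⁻¹' {a} ∈ U from (Ultrafilter.mem_map).1 (ha ▸ rfl)⟩

theorem exists_strictMono_forall_lt_color_eq {α : Type*} [Finite α] (c : ℕ → ℕ → α) :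
    ∃ a, ∃ f : ℕ → ℕ, StrictMono f ∧ ∀ m n, m < n → c (f m) (f n) = a := by
  -- `t i` is the colour of `(i, j)` for `U`-almost all `j`, and `a` the `U`-typical value of `t`;
  -- any finite set of points with `t i = a` then extends by a `U`-typical point.
  let U := hyperfilter ℕ
  choose t ht using fun i => U.exists_eventually_eq_of_finite (c i)
  obtain ⟨a, ha⟩ := U.exists_eventually_eq_of_finite t
  obtain ⟨f, -, hf⟩ := exists_seq_of_forall_finset_exists (fun i => t i = a)
    (fun i j => i < j ∧ c i j = a) fun s hs => by
      have hlarge : ∀ᶠ j in U, t j = a ∧ ∀ i ∈ s, i < j ∧ c i j = a := by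
        refine ha.and ((eventually_all_finset s).2 fun i hi => ?_)
        filter_upwards [Nat.hyperfilter_le_atTop (eventually_gt_atTop i), ht i] with j hij hcj
        exact ⟨hij, hcj.trans (hs i hi)⟩
      exact hlarge.exists
  exact ⟨a, f, strictMono_nat_of_lt_succ fun n => (hf n (n + 1) n.lt_succ_self).1,
    fun m n hmn => (hf m n hmn).2⟩

theorem exists_idempotent_factorization {S : Type*} [Semigroup S] [Finite S] (c : ℕ → ℕ → S)
    (hc : ∀ {i j l}, i < j → j < l → c i j * c j l = c i l) :
    ∃ k : ℕ → ℕ, StrictMono k ∧ 0 < k 0 ∧ ∃ e : S, e * e = e ∧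
      (∀ i, c (k i) (k (i + 1)) = e) ∧ c 0 (k 0) * e = c 0 (k 0) := by
  obtain ⟨e, f, hf, hfe⟩ := exists_strictMono_forall_lt_color_eq c
  have hf1 : 0 < f 1 := (Nat.zero_le _).trans_lt (hf one_pos)
  have he : e * e = e :=
    calc e * e = c (f 0) (f 1) * c (f 1) (f 2) := by rw [hfe 0 1 one_pos, hfe 1 2 one_lt_two]
      _ = e := by rw [hc (hf one_pos) (hf one_lt_two), hfe 0 2 two_pos]
  -- Cutting at `f 2, f 3, …` keeps `f 1 > 0` inside the prefix, where it absorbs one factor `e`.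
  have hprefix : c 0 (f 2) = c 0 (f 1) * e := by
    rw [← hfe 1 2 one_lt_two, hc hf1 (hf one_lt_two)]
  refine ⟨fun n => f (n + 2), hf.comp fun m n h => by omega, hf1.trans (hf one_lt_two), e, he,
    fun i => hfe _ _ (by omega), ?_⟩
  simp only [hprefix, mul_assoc, he]

theorem stmt19_general {A S : Type} [Semigroup S] [Finite S]
    (φ : FreeSemigroup A →ₙ* S)
    (w : ℕ → A) :
    ∃ k : ℕ → ℕ, StrictMono k ∧ 0 < k 0 ∧
      ∃ e : S, e * e = e ∧
        (∀ i : ℕ, φ (seg w (k i) (k (i + 1))) = e) ∧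
        φ (seg w 0 (k 0)) * e = φ (seg w 0 (k 0)) :=
  exists_idempotent_factorization (fun i j => φ (seg w i j)) fun hij hjl => by
    rw [← map_mul, seg_mul w hij hjl]

/-- Ramsey factorization: for a semigroup morphism `φ` from `A⁺` onto a finite
semigroup `S`, every infinite word `w` factors as `u₀u₁u₂⋯` with
`φ(u₁) = φ(u₂) = ⋯ = e` idempotent and `φ(u₀)·e = φ(u₀)`. -/
theorem stmt19 {A S : Type} [Finite A] [Semigroup S] [Finite S]
    (φ : FreeSemigroup A →ₙ* S) (hsurj : Function.Surjective φ)
    (w : ℕ → A) :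
    ∃ k : ℕ → ℕ, StrictMono k ∧ 0 < k 0 ∧
      ∃ e : S, e * e = e ∧
        (∀ i : ℕ, φ (seg w (k i) (k (i + 1))) = e) ∧
        φ (seg w 0 (k 0)) * e = φ (seg w 0 (k 0)) :=
  stmt19_general φ w
end
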